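/- Let θ ∈ (0, π/2), λ ≥ 1. Define the Markov transition kernel on ℝ₊ by P(δ, A) = ∫∫_{ℝ²} 1_A(δ − x cos θ − y sin θ)·p*_δ(x,y) dx dy, where p*_δ is the selected-step density. Then for every δ ∈ ℝ₊ and every Borel set A ⊆ ℝ₊ with positive Lebesgue measure, P(δ, A) > 0. -/

import Mathlib

open MeasureTheory ProbabilityTheory Real Set Filter

noncomputable def phi (x : ℝ) : ℝ := Real.exp (-x^2/2) / Real.sqrt (2*Real.pi)
noncomputable def Phi (x : ℝ) : ℝ := ∫ u in Set.Iic x, phi u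
noncomputable def pdelta (θ δ : ℝ) (z : ℝ × ℝ) : ℝ :=
  phi z.1 * phi z.2 * Set.indicator (Set.Ici (0:ℝ)) (fun _ => 1)
    (δ - z.1 * Real.cos θ - z.2 * Real.sin θ) / Phi δ
noncomputable def p1 (θ δ x : ℝ) : ℝ :=
  phi x * Phi ((δ - x * Real.cos θ) / Real.sin θ) / Phi δ
noncomputable def F1 (θ δ x : ℝ) : ℝ := ∫ u in Set.Iic x, p1 θ δ u
noncomputable def pstar (lam : ℕ) (θ δ : ℝ) (z : ℝ × ℝ) : ℝ :=
  (lam : ℝ) * pdelta θ δ z * F1 θ δ z.1 ^ (lam - 1)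
noncomputable def p1star (lam : ℕ) (θ δ x : ℝ) : ℝ :=
  (lam : ℝ) * p1 θ δ x * F1 θ δ x ^ (lam - 1)
noncomputable def p2star (lam : ℕ) (θ δ y : ℝ) : ℝ :=
  (lam : ℝ) * (phi y / Phi δ) *
    ∫ u in Set.Iic ((δ - y * Real.sin θ) / Real.cos θ), phi u * F1 θ δ u ^ (lam - 1)


/-!
The integrand vanishes off the slab `S = {z | δ - z.1 cos θ - z.2 sin θ ∈ A}` and is strictly
positive on it: `A ⊆ ℝ₊` keeps the truncation indicator of `pdelta` equal to `1` there, and the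
Gaussian factors and the marginal CDF `F1` are positive. It is integrable, being dominated by a
multiple of the product Gaussian density. Each slice of `S` at fixed `z.1` is an affine image of
`A`, of measure `volume A / sin θ > 0`, so `S` has infinite planar measure.
-/

lemma setIntegral_pos_of_pos_on {X : Type*} [MeasurableSpace X] {μ : Measure X}
    {f : X → ℝ} {s : Set X} (hs : MeasurableSet s) (hfi : IntegrableOn f s μ)
    (hpos : ∀ x ∈ s, 0 < f x) (hμ : μ s ≠ 0) : 0 < ∫ x in s, f x ∂μ := by
  rw [setIntegral_pos_iff_support_of_nonneg_ae
      (ae_restrict_of_forall_mem hs fun x hx => (hpos x hx).le) hfi,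
    inter_eq_right.2 fun x hx => Function.mem_support.2 (hpos x hx).ne']
  exact pos_iff_ne_zero.2 hμ

lemma monotone_setIntegral_Iic {f : ℝ → ℝ} (hfi : Integrable f) (hf : 0 ≤ f) :
    Monotone fun x => ∫ u in Iic x, f u := fun _ _ h =>
  setIntegral_mono_set hfi.integrableOn (ae_of_all _ hf) (Iic_subset_Iic.2 h).eventuallyLE

lemma volume_preimage_affine_eq_top {a b c : ℝ} (hb : b ≠ 0) {A : Set ℝ}
    (hA : MeasurableSet A) (hA0 : volume A ≠ 0) :
    volume ((fun z : ℝ × ℝ => c - z.1 * a - z.2 * b) ⁻¹' A) = ⊤ := by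
  have hslice : ∀ x : ℝ, Prod.mk x ⁻¹' ((fun z : ℝ × ℝ => c - z.1 * a - z.2 * b) ⁻¹' A)
      = (fun y => y * b) ⁻¹' (Neg.neg ⁻¹' ((fun t => (c - x * a) + t) ⁻¹' A)) := by
    intro x
    ext y
    simp only [mem_preimage, sub_eq_add_neg (c - x * a)]
  rw [Measure.volume_eq_prod, Measure.prod_apply (hA.preimage (by fun_prop))]
  simp_rw [hslice, Real.volume_preimage_mul_right hb, Measure.measure_preimage_neg,
    measure_preimage_add, lintegral_const, Real.volume_univ]
  exact ENNReal.mul_top (mul_ne_zero (by simp [hb]) hA0)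

lemma phi_eq_gaussianPDFReal : phi = gaussianPDFReal 0 1 := by
  ext x
  simp only [phi, gaussianPDFReal, NNReal.coe_one, mul_one, sub_zero]
  ring

lemma phi_pos (x : ℝ) : 0 < phi x := by
  rw [phi_eq_gaussianPDFReal]
  exact gaussianPDFReal_pos 0 1 x one_ne_zero

lemma measurable_phi : Measurable phi :=
  phi_eq_gaussianPDFReal ▸ measurable_gaussianPDFReal 0 1

lemma integrable_phi : Integrable phi :=
  phi_eq_gaussianPDFReal ▸ integrable_gaussianPDFReal 0 1

lemma integral_phi : ∫ u, phi u = 1 :=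
  phi_eq_gaussianPDFReal ▸ integral_gaussianPDFReal_eq_one 0 one_ne_zero

lemma Phi_pos (x : ℝ) : 0 < Phi x :=
  setIntegral_pos_of_pos_on measurableSet_Iic integrable_phi.integrableOn
    (fun u _ => phi_pos u) (by simp)

lemma Phi_le_one (x : ℝ) : Phi x ≤ 1 :=
  integral_phi ▸ setIntegral_le_integral integrable_phi (ae_of_all _ fun u => (phi_pos u).le)

lemma measurable_Phi : Measurable Phi :=
  (monotone_setIntegral_Iic integrable_phi fun u => (phi_pos u).le).measurable

section Marginal

variable (θ δ : ℝ)

lemma p1_pos (x : ℝ) : 0 < p1 θ δ x :=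
  div_pos (mul_pos (phi_pos x) (Phi_pos _)) (Phi_pos δ)

lemma p1_le (x : ℝ) : p1 θ δ x ≤ phi x / Phi δ :=
  div_le_div_of_nonneg_right (mul_le_of_le_one_right (phi_pos x).le (Phi_le_one _))
    (Phi_pos δ).le

lemma measurable_p1 : Measurable (p1 θ δ) :=
  (measurable_phi.mul (measurable_Phi.comp (by fun_prop))).div_const _

lemma integrable_p1 : Integrable (p1 θ δ) :=
  (integrable_phi.div_const (Phi δ)).mono' (measurable_p1 θ δ).aestronglyMeasurable
    (ae_of_all _ fun x => (Real.norm_of_nonneg (p1_pos θ δ x).le).trans_le (p1_le θ δ x))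

lemma F1_pos (x : ℝ) : 0 < F1 θ δ x :=
  setIntegral_pos_of_pos_on measurableSet_Iic (integrable_p1 θ δ).integrableOn
    (fun u _ => p1_pos θ δ u) (by simp)

lemma F1_le (x : ℝ) : F1 θ δ x ≤ (Phi δ)⁻¹ :=
  calc F1 θ δ x ≤ ∫ u, p1 θ δ u :=
        setIntegral_le_integral (integrable_p1 θ δ) (ae_of_all _ fun u => (p1_pos θ δ u).le)
    _ ≤ ∫ u, phi u / Phi δ :=
        integral_mono (integrable_p1 θ δ) (integrable_phi.div_const _) (p1_le θ δ)
    _ = (Phi δ)⁻¹ := by rw [integral_div, integral_phi, one_div]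

lemma measurable_F1 : Measurable (F1 θ δ) :=
  (monotone_setIntegral_Iic (integrable_p1 θ δ) fun u => (p1_pos θ δ u).le).measurable

end Marginal

section SelectedStep

variable (lam : ℕ) (θ δ : ℝ)

lemma pstar_nonneg (z : ℝ × ℝ) : 0 ≤ pstar lam θ δ z := by
  unfold pstar pdelta
  have := phi_pos z.1; have := phi_pos z.2; have := Phi_pos δ; have := F1_pos θ δ z.1
  have : 0 ≤ (Ici (0 : ℝ)).indicator (fun _ => (1 : ℝ)) (δ - z.1 * cos θ - z.2 * sin θ) :=
    indicator_nonneg (fun _ _ => zero_le_one) _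
  positivity

lemma pstar_pos (hlam : 1 ≤ lam) {z : ℝ × ℝ}
    (hz : 0 ≤ δ - z.1 * cos θ - z.2 * sin θ) : 0 < pstar lam θ δ z := by
  unfold pstar pdelta
  rw [indicator_of_mem (mem_Ici.2 hz)]
  have := phi_pos z.1; have := phi_pos z.2; have := Phi_pos δ; have := F1_pos θ δ z.1
  have : (0 : ℝ) < lam := by exact_mod_cast hlam
  positivity

lemma pstar_le (z : ℝ × ℝ) :
    pstar lam θ δ z ≤ lam * (Phi δ)⁻¹ ^ (lam - 1) / Phi δ * (phi z.1 * phi z.2) := by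
  set ind := (Ici (0 : ℝ)).indicator (fun _ => (1 : ℝ)) (δ - z.1 * cos θ - z.2 * sin θ)
  have hind : ind ≤ 1 := indicator_apply_le' (fun _ => le_rfl) fun _ => zero_le_one
  have := phi_pos z.1; have := phi_pos z.2; have := Phi_pos δ
  have := F1_pos θ δ z.1; have := F1_le θ δ z.1
  calc pstar lam θ δ z = lam * (ind * F1 θ δ z.1 ^ (lam - 1)) / Phi δ * (phi z.1 * phi z.2) := by
        unfold pstar pdelta; ring
    _ ≤ lam * (1 * (Phi δ)⁻¹ ^ (lam - 1)) / Phi δ * (phi z.1 * phi z.2) := by gcongr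
    _ = lam * (Phi δ)⁻¹ ^ (lam - 1) / Phi δ * (phi z.1 * phi z.2) := by rw [one_mul]

lemma measurable_pstar : Measurable (pstar lam θ δ) := by
  unfold pstar pdelta
  have hind : Measurable fun z : ℝ × ℝ =>
      (Ici (0 : ℝ)).indicator (fun _ => (1 : ℝ)) (δ - z.1 * cos θ - z.2 * sin θ) :=
    (measurable_const.indicator measurableSet_Ici).comp (by fun_prop)
  exact (measurable_const.mul ((((measurable_phi.comp measurable_fst).mul
    (measurable_phi.comp measurable_snd)).mul hind).div_const _)).mul
    (((measurable_F1 θ δ).comp measurable_fst).pow_const _)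

lemma integrable_pstar : Integrable (pstar lam θ δ) := by
  have h := (integrable_phi.mul_prod integrable_phi).const_mul
    (lam * (Phi δ)⁻¹ ^ (lam - 1) / Phi δ)
  rw [← Measure.volume_eq_prod] at h
  exact h.mono' (measurable_pstar lam θ δ).aestronglyMeasurable
    (ae_of_all _ fun z => (Real.norm_of_nonneg (pstar_nonneg lam θ δ z)).trans_le
      (pstar_le lam θ δ z))

end SelectedStep

theorem stmt13_general (lam : ℕ) (hlam : 1 ≤ lam) (θ : ℝ)
    (hθ : θ ∈ Set.Ioo 0 (Real.pi/2))
    (δ : ℝ)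
    (A : Set ℝ) (hA : MeasurableSet A) (hAsub : A ⊆ Set.Ici 0)
    (hApos : 0 < volume A) :
    0 < ∫ z : ℝ × ℝ,
        Set.indicator A (fun _ => (1:ℝ)) (δ - z.1 * Real.cos θ - z.2 * Real.sin θ)
          * pstar lam θ δ z := by
  have hsin : sin θ ≠ 0 := (sin_pos_of_pos_of_lt_pi hθ.1 (by linarith [hθ.2, pi_pos])).ne'
  set T : ℝ × ℝ → ℝ := fun z => δ - z.1 * cos θ - z.2 * sin θ
  have hS : MeasurableSet (T ⁻¹' A) := hA.preimage (by fun_prop)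
  have hintegrand : ∀ z, A.indicator (fun _ => (1 : ℝ)) (T z) * pstar lam θ δ z
      = (T ⁻¹' A).indicator (pstar lam θ δ) z := fun z => by
    by_cases hz : T z ∈ A <;> simp [hz]
  rw [integral_congr_ae (ae_of_all _ hintegrand), integral_indicator hS]
  refine setIntegral_pos_of_pos_on hS (integrable_pstar lam θ δ).integrableOn
    (fun z hz => pstar_pos lam θ δ hlam (hAsub hz)) ?_
  rw [volume_preimage_affine_eq_top hsin hA hApos.ne']
  exact ENNReal.top_ne_zero

/-- the transition kernel P(δ,A) of the chain δ_{t+1} = δ_t − N*·n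
gives positive mass to every Borel A ⊆ ℝ₊ of positive Lebesgue measure. -/
theorem stmt13 (lam : ℕ) (hlam : 1 ≤ lam) (θ : ℝ)
    (hθ : θ ∈ Set.Ioo 0 (Real.pi/2))
    (δ : ℝ) (hδ : 0 ≤ δ)
    (A : Set ℝ) (hA : MeasurableSet A) (hAsub : A ⊆ Set.Ici 0)
    (hApos : 0 < volume A) :
    0 < ∫ z : ℝ × ℝ,
        Set.indicator A (fun _ => (1:ℝ)) (δ - z.1 * Real.cos θ - z.2 * Real.sin θ)
          * pstar lam θ δ z :=
  stmt13_general lam hlam θ hθ δ A hA hAsub hApos
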